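/- arXiv:1407.8035 — 4 statements merged into one kernel-verified Lean document; each statement's English description precedes it below -/
import Mathlib

section
/- Let G be a graph on n vertices and let t be an integer with 1 ≤ t ≤ ⌊n/2⌋ − 1. Then the chromatic number of the tree graph 𝒯_{G, n−t} is at most the (t+1)-th cut number of G: χ(𝒯_{G,n−t}) ≤ cut_{t+1}(G). -/
/-!
Take a partition `(S, Sᶜ)` realising `cut_{t+1}(G)`. A tree on `n - t` vertices misses at most
`t` vertices, so it meets both sides of the partition, and being connected it contains an edge
of the cut. Colouring each tree by such a cut edge is proper, because adjacent trees of
`𝒯_{G,n-t}` are edge-disjoint; this uses `cut_{t+1}(G)` colours.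
-/

open SimpleGraph Finset
open scoped Classical

/-- `H` is a tree subgraph of `G` with exactly `t` vertices. -/
def IsTreeSub {V : Type*} (G : SimpleGraph V) (H : G.Subgraph) (t : ℕ) : Prop :=
  H.coe.IsTree ∧ H.verts.ncard = t

/-- The tree graph `𝒯_{G,t}`: vertices are tree subgraphs of `G` with `t` vertices,
adjacent iff edge-disjoint. -/
def treeGraph {V : Type*} (G : SimpleGraph V) (t : ℕ) :
    SimpleGraph {H : G.Subgraph // IsTreeSub G H t} :=
  SimpleGraph.fromRel (fun H H' => Disjoint H.1.edgeSet H'.1.edgeSet)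

/-- The `r`-th cut number of `G`: the minimum number of edges between the two sides of a
partition of the vertex set into two parts, each of size at least `r`. -/
noncomputable def cutNumber {V : Type*} (G : SimpleGraph V) (r : ℕ) : ℕ :=
  sInf { m | ∃ S : Set V, r ≤ S.ncard ∧ r ≤ Sᶜ.ncard ∧
    m = {e ∈ G.edgeSet | ∃ a ∈ S, ∃ b ∈ Sᶜ, e = s(a, b)}.ncard }

variable {V : Type*}

def cutEdges (G : SimpleGraph V) (S : Set V) : Set (Sym2 V) :=
  {e ∈ G.edgeSet | ∃ a ∈ S, ∃ b ∈ Sᶜ, e = s(a, b)}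

lemma exists_cutNumber_eq_ncard_cutEdges [Finite V] (G : SimpleGraph V) {r : ℕ}
    (hr : 2 * r ≤ Nat.card V) :
    ∃ S : Set V, r ≤ S.ncard ∧ r ≤ Sᶜ.ncard ∧ cutNumber G r = (cutEdges G S).ncard := by
  have hne :
      {m | ∃ S : Set V, r ≤ S.ncard ∧ r ≤ Sᶜ.ncard ∧ m = (cutEdges G S).ncard}.Nonempty := by
    obtain ⟨S, -, hS⟩ := Set.exists_subset_card_eq (s := (Set.univ : Set V)) (n := r)
      (by rw [Set.ncard_univ]; omega)
    have hSc := Set.ncard_add_ncard_compl S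
    exact ⟨_, S, hS.ge, by omega, rfl⟩
  exact Nat.sInf_mem hne

lemma Set.inter_nonempty_of_card_lt_ncard_add_ncard [Finite V] {s t : Set V}
    (h : Nat.card V < s.ncard + t.ncard) : (s ∩ t).Nonempty := by
  by_contra hst
  have hsub : s ⊆ tᶜ := fun x hs ht => hst ⟨x, hs, ht⟩
  have := Set.ncard_le_ncard hsub
  have := Set.ncard_add_ncard_compl t
  omega

lemma SimpleGraph.Subgraph.edgeSet_inter_cutEdges_nonempty {G : SimpleGraph V} {H : G.Subgraph}
    (hH : H.coe.Preconnected) {S : Set V} {u v : V} (hu : u ∈ H.verts) (hv : v ∈ H.verts)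
    (huS : u ∈ S) (hvS : v ∉ S) : (H.edgeSet ∩ cutEdges G S).Nonempty := by
  obtain ⟨p⟩ := hH ⟨u, hu⟩ ⟨v, hv⟩
  obtain ⟨d, -, hd₁, hd₂⟩ := p.exists_boundary_dart (Subtype.val ⁻¹' S) huS hvS
  have hadj : H.Adj d.fst d.snd := d.adj
  exact ⟨s(d.fst, d.snd), hadj, hadj.adj_sub, d.fst, hd₁, d.snd, hd₂, rfl⟩

lemma IsTreeSub.edgeSet_inter_cutEdges_nonempty [Finite V] {G : SimpleGraph V} {H : G.Subgraph}
    {k : ℕ} (hH : IsTreeSub G H k) {S : Set V} (hS : Nat.card V < k + S.ncard)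
    (hSc : Nat.card V < k + Sᶜ.ncard) : (H.edgeSet ∩ cutEdges G S).Nonempty := by
  obtain ⟨htree, rfl⟩ := hH
  obtain ⟨u, hu, huS⟩ := Set.inter_nonempty_of_card_lt_ncard_add_ncard hS
  obtain ⟨v, hv, hvS⟩ := Set.inter_nonempty_of_card_lt_ncard_add_ncard hSc
  exact H.edgeSet_inter_cutEdges_nonempty htree.connected.preconnected hu hv huS hvS

lemma SimpleGraph.chromaticNumber_le_ncard_of_forall_inter_nonempty {α β : Type*}
    (K : SimpleGraph α) (f : α → Set β) (hf : ∀ a b, K.Adj a b → Disjoint (f a) (f b))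
    {C : Set β} (hC : C.Finite) (hmeet : ∀ a, (f a ∩ C).Nonempty) :
    K.chromaticNumber ≤ C.ncard := by
  choose col hcol using hmeet
  let coloring : K.Coloring C :=
    Coloring.mk (fun a => ⟨col a, (hcol a).2⟩) fun {a b} hab heq => by
      have hcol_eq : col a = col b := congrArg Subtype.val heq
      exact Set.disjoint_left.mp (hf a b hab) (hcol a).1 (hcol_eq ▸ (hcol b).1)
  have := hC.fintype
  calc K.chromaticNumber ≤ Fintype.card C := coloring.colorable.chromaticNumber_le
    _ = C.ncard := by rw [Fintype.card_eq_nat_card, Nat.card_coe_set_eq]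

lemma treeGraph_adj_disjoint {G : SimpleGraph V} {k : ℕ}
    {H H' : {H : G.Subgraph // IsTreeSub G H k}} (h : (treeGraph G k).Adj H H') :
    Disjoint H.1.edgeSet H'.1.edgeSet := by
  obtain ⟨-, h | h⟩ := h
  exacts [h, h.symm]

/-- for a graph `G` on `n` vertices and `1 ≤ t ≤ ⌊n/2⌋ − 1`,
`χ(𝒯_{G, n−t}) ≤ cut_{t+1}(G)`. -/
theorem statement2 (n t : ℕ) (ht1 : 1 ≤ t) (ht2 : t ≤ n / 2 - 1)
    (G : SimpleGraph (Fin n)) :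
    (treeGraph G (n - t)).chromaticNumber ≤ (cutNumber G (t + 1) : ℕ∞) := by
  obtain ⟨S, hS, hSc, hcut⟩ :=
    exists_cutNumber_eq_ncard_cutEdges G (r := t + 1) (by rw [Nat.card_fin]; omega)
  rw [hcut]
  refine (treeGraph G (n - t)).chromaticNumber_le_ncard_of_forall_inter_nonempty
    (fun H => H.1.edgeSet) (fun _ _ => treeGraph_adj_disjoint) (Set.toFinite _) fun H => ?_
  exact H.2.edgeSet_inter_cutEdges_nonempty
    (by rw [Nat.card_fin]; omega) (by rw [Nat.card_fin]; omega)
end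

section
/- Let G be a graph, v a vertex of G, and σ a linear ordering of E(G). Consider an alternating 2-coloring of E(G) with respect to σ, and let E_v^R ⊆ E(G) be a set of edges containing every red edge incident with v. Suppose there exist t_1 pairwise edge-disjoint (σ,v)-consecutive paths in G such that at most t_2 of them contain an edge of E_v^R. Then there are at least t_1 − t_2 neutral edges incident with v lying in E(G) ∖ E_v^R. -/
/-! A path `u – v – w` with no edge in `E_v^R` has no red edge, since red edges at `v` lie in
`E_v^R`. Its two edges are consecutive in `σ`, so they cannot both be colored: they would both
be blue. Hence every such path contains a neutral edge at `v` outside `E_v^R`, and these edges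
are distinct because the paths are edge-disjoint. -/

open SimpleGraph Finset
open scoped Classical

/-- `σ` is a linear ordering of the edge set of `G`, presented as a duplicate-free list
whose members are exactly the edges of `G`. -/
def IsEdgeOrdering {V : Type*} (G : SimpleGraph V) (σ : List (Sym2 V)) : Prop :=
  σ.Nodup ∧ ∀ e, e ∈ σ ↔ e ∈ G.edgeSet

/-- `c` is an alternating 2-coloring of `E(G)` with respect to the ordering `σ`:
a partial assignment of colors (`some true` = red, `some false` = blue, `none` = neutral)
to edges of `G` such that any two consecutive colored edges get different colors. -/
def IsAltColoring {V : Type*} (G : SimpleGraph V) (σ : List (Sym2 V))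
    (c : Sym2 V → Option Bool) : Prop :=
  (∀ e, c e ≠ none → e ∈ G.edgeSet) ∧
  ((σ.map c).reduceOption).Chain' (· ≠ ·)

theorem List.ne_of_infix_of_isChain_reduceOption_map {α β : Type*} {c : α → Option β}
    {l : List α} (hl : ((l.map c).reduceOption).IsChain (· ≠ ·)) {a b : α}
    (hab : [a, b] <:+: l) {x y : β} (ha : c a = some x) (hb : c b = some y) : x ≠ y := by
  obtain ⟨l₁, l₂, rfl⟩ := hab
  have hsplit : ((l₁ ++ [a, b] ++ l₂).map c).reduceOption
      = (l₁.map c).reduceOption ++ [x, y] ++ (l₂.map c).reduceOption := by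
    simp [List.reduceOption_append, ha, hb]
  rw [hsplit] at hl
  exact List.isChain_pair.mp (hl.infix ⟨_, _, rfl⟩)

theorem IsEdgeOrdering.finite_edgeSet {V : Type*} {G : SimpleGraph V} {σ : List (Sym2 V)}
    (hσ : IsEdgeOrdering G σ) : G.edgeSet.Finite :=
  σ.toFinset.finite_toSet.subset fun e he => by simpa using (hσ.2 e).2 he

theorem IsAltColoring.eq_none_or_eq_none {V : Type*} {G : SimpleGraph V}
    {σ : List (Sym2 V)} {c : Sym2 V → Option Bool} (hc : IsAltColoring G σ c) {a b : Sym2 V}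
    (hab : [a, b] <:+: σ ∨ [b, a] <:+: σ) (ha : c a ≠ some true) (hb : c b ≠ some true) :
    c a = none ∨ c b = none := by
  match hca : c a, hcb : c b with
  | none, _ => exact Or.inl rfl
  | _, none => exact Or.inr rfl
  | some true, _ => exact absurd hca ha
  | _, some true => exact absurd hcb hb
  | some false, some false =>
    rcases hab with hab | hab
    · exact absurd rfl (List.ne_of_infix_of_isChain_reduceOption_map hc.2 hab hca hcb)
    · exact absurd rfl (List.ne_of_infix_of_isChain_reduceOption_map hc.2 hab hcb hca)

theorem Finset.card_le_ncard_of_pairwise_disjoint {ι α : Type*} {S : ι → Set α}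
    (hS : Pairwise fun i j => Disjoint (S i) (S j)) {T : Finset ι} {N : Set α} (hN : N.Finite)
    (hmeet : ∀ j ∈ T, (S j ∩ N).Nonempty) : T.card ≤ N.ncard := by
  rcases T.eq_empty_or_nonempty with rfl | ⟨j₀, hj₀⟩
  · simp
  have : Nonempty α := ⟨(hmeet j₀ hj₀).some⟩
  choose! f hf using hmeet
  rw [← Set.ncard_coe_finset]
  refine Set.ncard_le_ncard_of_injOn f (fun j hj => (hf j hj).2) ?_ hN
  intro j hj j' hj' hjj'
  by_contra hne
  exact (hS hne).ne_of_mem (hf j hj).1 (hjj' ▸ (hf j' hj').1) rfl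

/-- given an alternating 2-coloring of `E(G)` with respect to `σ`, a vertex `v`,
and a set `E_v^R` of edges containing every red edge incident with `v`: if there are `t₁`
pairwise edge-disjoint `(σ,v)`-consecutive paths of which at most `t₂` contain an edge of
`E_v^R`, then at least `t₁ − t₂` neutral edges incident with `v` lie in `E(G) ∖ E_v^R`. -/
theorem statement9 {V : Type*} (G : SimpleGraph V) (v : V)
    (σ : List (Sym2 V)) (hσ : IsEdgeOrdering G σ)
    (c : Sym2 V → Option Bool) (hc : IsAltColoring G σ c)
    (ER : Set (Sym2 V))
    (hER : ∀ e ∈ G.edgeSet, v ∈ e → c e = some true → e ∈ ER)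
    (t₁ t₂ : ℕ) (P : Fin t₁ → V × V)
    -- each `P j = (u, w)` encodes a path `u – v – w` of `G`
    (hpath : ∀ j, G.Adj (P j).1 v ∧ G.Adj v (P j).2 ∧ (P j).1 ≠ (P j).2)
    -- the two edges of each path are consecutive in the ordering `σ`
    (hcons : ∀ j, [s((P j).1, v), s(v, (P j).2)] <:+: σ ∨
      [s(v, (P j).2), s((P j).1, v)] <:+: σ)
    -- the paths are pairwise edge-disjoint
    (hdisj : Pairwise fun j j' =>
      Disjoint ({s((P j).1, v), s(v, (P j).2)} : Set (Sym2 V))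
        ({s((P j').1, v), s(v, (P j').2)} : Set (Sym2 V)))
    -- at most `t₂` of the paths contain an edge of `E_v^R`
    (ht₂ : (Finset.univ.filter fun j : Fin t₁ =>
        s((P j).1, v) ∈ ER ∨ s(v, (P j).2) ∈ ER).card ≤ t₂) :
    t₁ - t₂ ≤ {e | e ∈ G.edgeSet \ ER ∧ v ∈ e ∧ c e = none}.ncard := by
  have havoids : t₁ - t₂ ≤
      (univ.filter fun j : Fin t₁ => ¬(s((P j).1, v) ∈ ER ∨ s(v, (P j).2) ∈ ER)).card := by
    have := card_filter_add_card_filter_not (s := univ)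
      fun j : Fin t₁ => s((P j).1, v) ∈ ER ∨ s(v, (P j).2) ∈ ER
    rw [card_univ, Fintype.card_fin] at this
    omega
  refine havoids.trans <| Finset.card_le_ncard_of_pairwise_disjoint hdisj
    (hσ.finite_edgeSet.subset fun e he => he.1.1) fun j hj => ?_
  obtain ⟨h₁, h₂⟩ := not_or.mp (mem_filter.mp hj).2
  rcases hc.eq_none_or_eq_none (hcons j) (fun h => h₁ (hER _ (hpath j).1 (by simp) h))
      (fun h => h₂ (hER _ (hpath j).2.1 (by simp) h)) with h | h
  · exact ⟨_, Or.inl rfl, ⟨(hpath j).1, h₁⟩, by simp, h⟩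
  · exact ⟨_, Or.inr rfl, ⟨(hpath j).2.1, h₂⟩, by simp, h⟩
end

section
/- Let H be an Eulerian graph (connected with all vertex degrees even) and let G be a subgraph of H. Let σ be a linear ordering of E(G) induced by an Eulerian tour of H, i.e. e < e' in σ whenever e is traversed before e' in the tour. Then in any alternating 2-coloring of E(G) with respect to σ, for every vertex v of G the number of red edges of G incident with v is at most (deg_H(v) + 2)/2, and likewise the number of blue edges incident with v is at most (deg_H(v) + 2)/2. -/
/-!
In the Eulerian tour, the colored edges appear in the same order as in `σ` (all other edges
of the tour are neutral), so no two consecutive edges of the tour both carry color `b`.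
Each passage of the tour through `v` uses two consecutive edges at `v`, at most one of
them of color `b`; only the first and the last edge of the tour can be unpaired. Hence twice
the number of `b`-colored edges at `v` is at most `deg_H(v) + 2`.
-/

open SimpleGraph Finset
open scoped Classical

namespace List

variable {α β : Type*}

theorem filterMap_eq_filterMap_of_sublist (f : α → Option β) {l₁ l₂ : List α}
    (h : l₁.Sublist l₂) (hl₂ : l₂.Nodup) (hsome : ∀ a ∈ l₂, (f a).isSome → a ∈ l₁) :
    l₂.filterMap f = l₁.filterMap f := by
  induction h with
  | slnil => rfl
  | @cons l₁ l₂ a h ih =>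
    obtain ⟨ha, hl₂⟩ := nodup_cons.mp hl₂
    have hfa : f a = none :=
      Option.not_isSome_iff_eq_none.mp fun hs => ha (h.subset (hsome a mem_cons_self hs))
    rw [filterMap_cons_none hfa]
    exact ih hl₂ fun b hb hs => hsome b (mem_cons_of_mem a hb) hs
  | @cons_cons l₁ l₂ a h ih =>
    obtain ⟨ha, hl₂⟩ := nodup_cons.mp hl₂
    have hsome' : ∀ b ∈ l₂, (f b).isSome → b ∈ l₁ := fun b hb hs =>
      (mem_cons.mp (hsome b (mem_cons_of_mem a hb) hs)).resolve_left (ne_of_mem_of_not_mem hb ha)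
    simp only [filterMap_cons, ih hl₂ hsome']

theorem IsChain.of_filterMap {R : β → β → Prop} (f : α → Option β) :
    ∀ {l : List α}, (l.filterMap f).IsChain R →
      l.IsChain (fun a a' => ∀ x ∈ f a, ∀ y ∈ f a', R x y)
  | [], _ => isChain_nil
  | [a], _ => isChain_singleton a
  | a :: a' :: l, h => by
    refine isChain_cons_cons.mpr ⟨fun x hx y hy => ?_, of_filterMap f ?_⟩
    · rw [filterMap_cons_some hx, filterMap_cons_some hy] at h
      exact (isChain_cons_cons.mp h).1
    · cases hfa : f a with
      | none => rwa [filterMap_cons_none hfa] at h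
      | some x => exact (filterMap_cons_some hfa ▸ h).tail

theorem ncard_setOf_mem_and {l : List α} (hl : l.Nodup) (p : α → Prop) [DecidablePred p] :
    {a | a ∈ l ∧ p a}.ncard = l.countP (p ·) := by
  have hfilter : {a | a ∈ l ∧ p a} = ↑(l.filter (p ·)).toFinset := by ext; simp
  rw [hfilter, Set.ncard_coe_finset, toFinset_card_of_nodup (hl.filter _), countP_eq_length_filter]

end List

namespace SimpleGraph.Walk

variable {V : Type*} {G : SimpleGraph V}

/-- A walk leaving `v` through an edge outside `P` has two units of slack, which a preceding
`P`-edge into `v` consumes; this strengthening is what makes the induction go through. -/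
theorem two_mul_countP_add_le (v : V) (P : Sym2 V → Prop) [DecidablePred P] {x y : V}
    (p : G.Walk x y) (hp : p.edges.IsChain (fun e e' => ¬(P e ∧ P e'))) :
    2 * p.edges.countP (fun e => v ∈ e ∧ P e) +
        (if x = v ∧ ∀ e ∈ p.edges.head?, ¬P e then 2 else 0) ≤
      p.edges.countP (v ∈ ·) + (if x = v then 1 else 0) + (if y = v then 1 else 0) := by
  induction p with
  | nil => split_ifs <;> simp_all
  | @cons x z y hxz q ih =>
    rw [edges_cons, List.isChain_cons] at hp
    have hq_head : P s(x, z) → ∀ e ∈ q.edges.head?, ¬P e :=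
      fun hPe e he hPe' => hp.1 e he ⟨hPe, hPe'⟩
    specialize ih hp.2
    have hne : x ≠ z := hxz.ne
    simp only [edges_cons, List.countP_cons, List.head?_cons, Option.mem_some_iff, forall_eq',
      Sym2.mem_iff, decide_eq_true_eq]
    grind

theorem two_mul_countP_le (v : V) (P : Sym2 V → Prop) [DecidablePred P] {x y : V}
    (p : G.Walk x y) (hp : p.edges.IsChain (fun e e' => ¬(P e ∧ P e'))) :
    2 * p.edges.countP (fun e => v ∈ e ∧ P e) ≤ p.edges.countP (v ∈ ·) + 2 := by
  have := two_mul_countP_add_le v P p hp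
  split_ifs at this <;> omega

theorem IsEulerian.ncard_neighborSet {u w : V} {p : G.Walk u w} (hp : p.IsEulerian) (v : V) :
    (G.neighborSet v).ncard = p.edges.countP (v ∈ ·) := by
  have hincidence : G.incidenceSet v = {e | e ∈ p.edges ∧ v ∈ e} := by
    ext e
    simp [incidenceSet, hp.mem_edges_iff]
  rw [← Set.ncard_congr' (G.incidenceSetEquivNeighborSet v), hincidence,
    List.ncard_setOf_mem_and hp.isTrail.edges_nodup]

end SimpleGraph.Walk

theorem IsAltColoring.isChain_of_sublist {V : Type*} {G : SimpleGraph V} {σ l : List (Sym2 V)}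
    {c : Sym2 V → Option Bool} (hc : IsAltColoring G σ c) (hσ : IsEdgeOrdering G σ)
    (hsub : σ.Sublist l) (hl : l.Nodup) (b : Bool) :
    l.IsChain (fun e e' => ¬(c e = some b ∧ c e' = some b)) := by
  have hcolored : l.filterMap c = σ.filterMap c :=
    List.filterMap_eq_filterMap_of_sublist c hsub hl fun e _ hce =>
      (hσ.2 e).mpr (hc.1 e (Option.isSome_iff_ne_none.mp hce))
  have hreduce : (σ.map c).reduceOption = σ.filterMap c := by
    simp [List.reduceOption, List.filterMap_map]
  have halt : (l.filterMap c).IsChain (· ≠ ·) := by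
    rw [hcolored, ← hreduce]
    exact hc.2
  exact (List.IsChain.of_filterMap c halt).imp fun e e' h ⟨he, he'⟩ => h b he b he' rfl

theorem statement10_general {V : Type*} (H G : SimpleGraph V)
    (u : V) (W : H.Walk u u) (hW : W.IsEulerian)
    (σ : List (Sym2 V)) (hσ : IsEdgeOrdering G σ) (hsub : σ.Sublist W.edges)
    (c : Sym2 V → Option Bool) (hc : IsAltColoring G σ c) :
    ∀ (v : V) (b : Bool),
      (({e | e ∈ G.edgeSet ∧ v ∈ e ∧ c e = some b}).ncard : ℝ) ≤
        (((H.neighborSet v).ncard : ℝ) + 2) / 2 := by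
  intro v b
  have hnodup : W.edges.Nodup := hW.isTrail.edges_nodup
  have hcolored : {e | e ∈ G.edgeSet ∧ v ∈ e ∧ c e = some b} =
      {e | e ∈ W.edges ∧ v ∈ e ∧ c e = some b} := by
    ext e
    refine ⟨fun ⟨he, hv, hce⟩ => ⟨hsub.subset ((hσ.2 e).mpr he), hv, hce⟩,
      fun ⟨_, hv, hce⟩ => ⟨hc.1 e (by simp [hce]), hv, hce⟩⟩
  have hcount := W.two_mul_countP_le v (fun e => c e = some b)
    (hc.isChain_of_sublist hσ hsub hnodup b)
  rw [hcolored, List.ncard_setOf_mem_and hnodup, hW.ncard_neighborSet v,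
    le_div_iff₀ two_pos, mul_comm]
  exact_mod_cast hcount

/-- let `H` be an Eulerian graph, `G ≤ H` a subgraph, and `σ` an ordering of
`E(G)` induced by an Eulerian tour of `H` (i.e. `σ` is the subsequence of the tour's edge
list consisting of the edges of `G`). Then in any alternating 2-coloring of `E(G)` with
respect to `σ`, for every vertex `v` the number of red (and likewise blue) edges of `G`
incident with `v` is at most `(deg_H(v) + 2)/2`. -/
theorem statement10 {V : Type*} [Fintype V] (H G : SimpleGraph V) (hGH : G ≤ H)
    (u : V) (W : H.Walk u u) (hW : W.IsEulerian)
    (σ : List (Sym2 V)) (hσ : IsEdgeOrdering G σ) (hsub : σ.Sublist W.edges)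
    (c : Sym2 V → Option Bool) (hc : IsAltColoring G σ c) :
    ∀ (v : V) (b : Bool),
      (({e | e ∈ G.edgeSet ∧ v ∈ e ∧ c e = some b}).ncard : ℝ) ≤
        (((H.neighborSet v).ncard : ℝ) + 2) / 2 :=
  statement10_general H G u W hW σ hσ hsub c hc
end

section
/- Let n be an even positive integer. Then the clique number of the spanning tree graph of the complete graph K_n equals n/2; that is, the maximum number of pairwise edge-disjoint spanning trees of K_n is n/2. -/
/-!
A spanning tree of `K_n` has `n - 1` of its `n(n - 1)/2` edges, so at most `n / 2` of them are
pairwise edge-disjoint. Conversely, for `j < n / 2` the zigzag paths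
`j, j + 1, j - 1, j + 2, j - 2, …` in `ℤ/n` are Hamiltonian, and every edge `{u, v}` of the
`j`-th one has `u + v ∈ {2j, 2j + 1}`, so they are pairwise edge-disjoint.
-/

open SimpleGraph Finset
open scoped Classical

namespace SimpleGraph

variable {V : Type*} {G : SimpleGraph V}

theorem isTree_coe_toSubgraph {H : SimpleGraph V} (h : H ≤ G) (hH : H.IsTree) :
    (toSubgraph H h).coe.IsTree :=
  ((toSubgraph H h).spanningCoeEquivCoeOfSpanning (toSubgraph.isSpanning H h)).isTree_iff.mp hH

theorem pathGraph_isTree (n : ℕ) : (pathGraph (n + 1)).IsTree := by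
  rw [isTree_iff_connected_and_card, Nat.card_fin, add_left_inj]
  refine ⟨pathGraph_connected n, ?_⟩
  have hbij : Function.Bijective fun i : Fin n =>
      (⟨s(i.castSucc, i.succ), by simp [pathGraph_adj]⟩ : (pathGraph (n + 1)).edgeSet) := by
    refine ⟨fun i j hij => ?_, ?_⟩
    · simp only [Subtype.mk.injEq, Sym2.eq_iff, Fin.ext_iff, Fin.val_castSucc, Fin.val_succ] at hij
      exact Fin.ext (by omega)
    · rintro ⟨e, he⟩
      induction e using Sym2.ind with | _ u v => ?_
      rcases pathGraph_adj.mp he with h | h <;> dsimp only at h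
      · exact ⟨⟨u, by omega⟩, by simp [Fin.ext_iff]; omega⟩
      · exact ⟨⟨v, by omega⟩, by simp [Fin.ext_iff]; omega⟩
  simpa using (Nat.card_eq_of_bijective _ hbij).symm

theorem Subgraph.ncard_edgeSet_add_one [Finite V] {H : G.Subgraph} (hs : H.IsSpanning)
    (ht : H.coe.IsTree) : H.edgeSet.ncard + 1 = Nat.card V := by
  have hspan : H.spanningCoe.IsTree := (H.spanningCoeEquivCoeOfSpanning hs).isTree_iff.mpr ht
  rw [← edgeSet_spanningCoe, ← Nat.card_coe_set_eq]
  exact (isTree_iff_connected_and_card.mp hspan).2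

theorem card_mul_le_ncard_edgeSet [Finite V] {ι : Type*} [Finite ι] (f : ι → G.Subgraph)
    (hf : ∀ i, (f i).IsSpanning ∧ (f i).coe.IsTree)
    (hdisj : Pairwise fun i j => Disjoint (f i).edgeSet (f j).edgeSet) :
    Nat.card ι * (Nat.card V - 1) ≤ G.edgeSet.ncard :=
  calc Nat.card ι * (Nat.card V - 1) = ∑ᶠ i, (f i).edgeSet.ncard := by
        have hcard : ∀ i, (f i).edgeSet.ncard = Nat.card V - 1 := fun i => by
          have := Subgraph.ncard_edgeSet_add_one (hf i).1 (hf i).2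
          omega
        have := Fintype.ofFinite ι
        simp [hcard, finsum_eq_sum_of_fintype, Nat.card_eq_fintype_card]
    _ = (⋃ i, (f i).edgeSet).ncard :=
        (Set.ncard_iUnion_of_finite (fun _ => Set.toFinite _) hdisj).symm
    _ ≤ G.edgeSet.ncard :=
        Set.ncard_le_ncard (Set.iUnion_subset fun i => (f i).edgeSet_subset) (Set.toFinite _)

theorem ncard_edgeSet_top [Finite V] :
    (⊤ : SimpleGraph V).edgeSet.ncard = (Nat.card V).choose 2 := by
  have := Fintype.ofFinite V
  rw [Set.ncard_eq_toFinset_card', ← edgeFinset, card_edgeFinset_top_eq_card_choose_two,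
    Nat.card_eq_fintype_card]

theorem card_le_half_of_pairwise_disjoint [Finite V] [Nontrivial V] {ι : Type*} [Finite ι]
    (f : ι → (⊤ : SimpleGraph V).Subgraph) (hf : ∀ i, (f i).IsSpanning ∧ (f i).coe.IsTree)
    (hdisj : Pairwise fun i j => Disjoint (f i).edgeSet (f j).edgeSet) :
    Nat.card ι ≤ Nat.card V / 2 := by
  have hpacking := card_mul_le_ncard_edgeSet f hf hdisj
  rw [ncard_edgeSet_top, Nat.choose_two_right] at hpacking
  have hV := Finite.one_lt_card (α := V)
  have h2 : 2 * Nat.card ι * (Nat.card V - 1) ≤ Nat.card V * (Nat.card V - 1) := by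
    rw [mul_assoc]
    exact (Nat.mul_le_mul_left 2 hpacking).trans (Nat.mul_div_le _ _)
  rw [Nat.le_div_iff_mul_le two_pos, mul_comm]
  exact Nat.le_of_mul_le_mul_right h2 (by omega)

theorem isTreeSub_card_iff [Finite V] {H : G.Subgraph} :
    IsTreeSub G H (Nat.card V) ↔ H.IsSpanning ∧ H.coe.IsTree := by
  rw [IsTreeSub, Subgraph.isSpanning_iff, and_comm, ← Set.ncard_univ]
  exact and_congr_left' ⟨fun h => Set.eq_of_subset_of_ncard_le (Set.subset_univ _) h.ge,
    fun h => h ▸ rfl⟩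

theorem treeGraph_adj {t : ℕ} {H H' : {H : G.Subgraph // IsTreeSub G H t}} :
    (treeGraph G t).Adj H H' ↔ H ≠ H' ∧ Disjoint H.1.edgeSet H'.1.edgeSet := by
  simp [treeGraph, disjoint_comm]

theorem cliqueNum_treeGraph_top_le [Finite V] [Nontrivial V] :
    (treeGraph (⊤ : SimpleGraph V) (Nat.card V)).cliqueNum ≤ Nat.card V / 2 := by
  obtain ⟨s, hs⟩ := (treeGraph (⊤ : SimpleGraph V) (Nat.card V)).exists_isNClique_cliqueNum
  rw [← hs.card_eq, ← Nat.card_eq_finsetCard]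
  exact card_le_half_of_pairwise_disjoint (fun H : s => H.1.1)
    (fun H => isTreeSub_card_iff.mp H.1.2)
    fun H H' hne => (treeGraph_adj.mp (hs.isClique H.2 H'.2 (Subtype.coe_ne_coe.mpr hne))).2

theorem le_cliqueNum_treeGraph [Finite V] [Nontrivial V] {m : ℕ} (f : Fin m → G.Subgraph)
    (hf : ∀ i, (f i).IsSpanning ∧ (f i).coe.IsTree)
    (hdisj : Pairwise fun i j => Disjoint (f i).edgeSet (f j).edgeSet) :
    m ≤ (treeGraph G (Nat.card V)).cliqueNum := by
  have hne : ∀ i, (f i).edgeSet.Nonempty := fun i => by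
    have := Subgraph.ncard_edgeSet_add_one (hf i).1 (hf i).2
    have := Finite.one_lt_card (α := V)
    exact Set.nonempty_of_ncard_ne_zero (by omega)
  let g (i : Fin m) : {H // IsTreeSub G H (Nat.card V)} := ⟨f i, isTreeSub_card_iff.mpr (hf i)⟩
  have hg : Function.Injective g := Function.injective_iff_pairwise_ne.mpr fun i j hij heq => by
    have hdisj_ij : Disjoint (f i).edgeSet (f j).edgeSet := hdisj hij
    rw [show f i = f j from congrArg Subtype.val heq, disjoint_self] at hdisj_ij
    exact (hne j).ne_empty hdisj_ij
  have hclique : (treeGraph G (Nat.card V)).IsClique (univ.map ⟨g, hg⟩ : Set _) := by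
    rw [coe_map, coe_univ, Set.image_univ]
    rintro _ ⟨i, rfl⟩ _ ⟨j, rfl⟩ hij
    exact treeGraph_adj.mpr ⟨hij, hdisj fun h => hij (congrArg g h)⟩
  simpa using hclique.card_le_cliqueNum

end SimpleGraph

/-- The `s`-th term of `0, 1, -1, 2, -2, …` in `ℤ/n`, with `-a` represented by `n - a`. -/
def zigzag (n s : ℕ) : ℕ := if s % 2 = 1 then (s + 1) / 2 else if s = 0 then 0 else n - s / 2

theorem zigzag_lt {n s : ℕ} (hs : s < n) : zigzag n s < n := by
  unfold zigzag; split_ifs <;> omega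

theorem zigzag_injOn {n : ℕ} : Set.InjOn (zigzag n) (Set.Iio n) := fun s hs s' hs' h => by
  rw [Set.mem_Iio] at hs hs'
  unfold zigzag at h; split_ifs at h <;> omega

theorem zigzag_add_zigzag_succ_modEq {n s : ℕ} (hs : s + 1 < n) :
    zigzag n s + zigzag n (s + 1) ≡ 1 - s % 2 [MOD n] := by
  have hsum : zigzag n s + zigzag n (s + 1) = 1 - s % 2 ∨
      zigzag n s + zigzag n (s + 1) = n + (1 - s % 2) := by
    unfold zigzag; split_ifs <;> first | contradiction | omega
  rcases hsum with hsum | hsum <;> rw [hsum]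
  exact Nat.add_modEq_left

noncomputable def zigzagEquiv (n j : ℕ) [NeZero n] : Fin n ≃ Fin n :=
  Equiv.ofBijective (fun s => Fin.ofNat n (j + zigzag n s)) <|
    Finite.injective_iff_bijective.mp fun s s' h =>
      Fin.ext <| zigzag_injOn s.2 s'.2 <|
        (Nat.ModEq.add_left_cancel' j (by simpa [Fin.ext_iff, Nat.ModEq] using h)).eq_of_lt_of_lt
          (zigzag_lt s.2) (zigzag_lt s'.2)

noncomputable def zigzagPath (n j : ℕ) [NeZero n] : SimpleGraph (Fin n) :=
  (pathGraph n).map (zigzagEquiv n j)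

section ZigzagPath

variable {n : ℕ} [NeZero n]

theorem zigzagEquiv_val (j : ℕ) (s : Fin n) :
    (zigzagEquiv n j s).val = (j + zigzag n s) % n :=
  Fin.val_ofNat _ _

theorem zigzagPath_isTree (j : ℕ) : (zigzagPath n j).IsTree := by
  obtain ⟨m, rfl⟩ := Nat.exists_eq_succ_of_ne_zero (NeZero.ne n)
  exact (Iso.map (zigzagEquiv _ j) _).isTree_iff.mp (pathGraph_isTree m)

theorem zigzagEquiv_add_zigzagEquiv_succ_modEq (j : ℕ) {s t : Fin n} (hst : s.val + 1 = t.val) :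
    (zigzagEquiv n j s).val + (zigzagEquiv n j t).val ≡ 2 * j + (1 - s % 2) [MOD n] := by
  rw [zigzagEquiv_val, zigzagEquiv_val, ← hst]
  calc _ ≡ (j + zigzag n s) + (j + zigzag n (s + 1)) [MOD n] :=
        (Nat.mod_modEq _ _).add (Nat.mod_modEq _ _)
    _ = 2 * j + (zigzag n s + zigzag n (s + 1)) := by ring
    _ ≡ 2 * j + (1 - s % 2) [MOD n] :=
        (zigzag_add_zigzag_succ_modEq (hst ▸ t.2)).add_left _

theorem zigzagPath_adj_modEq {j : ℕ} {u v : Fin n} (h : (zigzagPath n j).Adj u v) :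
    ∃ e ≤ 1, u.val + v.val ≡ 2 * j + e [MOD n] := by
  obtain ⟨a, b, hab, rfl, rfl⟩ := ((map_adj' _ _ _ _).mp h).2
  rcases pathGraph_adj.mp hab with hb | ha
  · exact ⟨1 - a % 2, by omega, zigzagEquiv_add_zigzagEquiv_succ_modEq j hb⟩
  · refine ⟨1 - b % 2, by omega, ?_⟩
    rw [add_comm]
    exact zigzagEquiv_add_zigzagEquiv_succ_modEq j ha

theorem zigzagPath_disjoint {j j' : ℕ} (hj : j < n / 2) (hj' : j' < n / 2) (hne : j ≠ j') :
    Disjoint (zigzagPath n j).edgeSet (zigzagPath n j').edgeSet := by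
  refine Set.disjoint_left.mpr fun e => Sym2.ind (fun u v he he' => ?_) e
  obtain ⟨e, he, h⟩ := zigzagPath_adj_modEq he
  obtain ⟨e', he', h'⟩ := zigzagPath_adj_modEq he'
  have := (h.symm.trans h').eq_of_lt_of_lt (by omega) (by omega)
  omega

end ZigzagPath

theorem exists_pairwise_disjoint_spanning_trees_top (n : ℕ) [NeZero n] :
    ∃ f : Fin (n / 2) → (⊤ : SimpleGraph (Fin n)).Subgraph,
      (∀ j, (f j).IsSpanning ∧ (f j).coe.IsTree) ∧
      Pairwise fun i j => Disjoint (f i).edgeSet (f j).edgeSet :=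
  ⟨fun j => toSubgraph (zigzagPath n j) le_top,
    fun j => ⟨toSubgraph.isSpanning _ _, isTree_coe_toSubgraph _ (zigzagPath_isTree j)⟩,
    fun i j hij => zigzagPath_disjoint i.2 j.2 (Fin.val_ne_of_ne hij)⟩

/-- for an even positive integer `n`, the clique number of the spanning tree
graph of `K_n` equals `n/2`; that is, the maximum number of pairwise edge-disjoint spanning
trees of `K_n` is `n/2`. -/
theorem statement14 (n : ℕ) (hn : 0 < n) (heven : Even n) :
    (treeGraph (⊤ : SimpleGraph (Fin n)) n).cliqueNum = n / 2 ∧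
    sSup { m | ∃ f : Fin m → (⊤ : SimpleGraph (Fin n)).Subgraph,
        (∀ j, (f j).IsSpanning ∧ (f j).coe.IsTree) ∧
        Pairwise fun j j' => Disjoint (f j).edgeSet (f j').edgeSet } = n / 2 := by
  have : NeZero n := ⟨hn.ne'⟩
  have : Nontrivial (Fin n) :=
    Fin.nontrivial_iff_two_le.mpr (by obtain ⟨k, rfl⟩ := heven; omega)
  obtain ⟨T, hT, hTdisj⟩ := exists_pairwise_disjoint_spanning_trees_top n
  have hle := cliqueNum_treeGraph_top_le (V := Fin n)
  have hge := le_cliqueNum_treeGraph T hT hTdisj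
  rw [Nat.card_fin] at hle hge
  refine ⟨le_antisymm hle hge, IsGreatest.csSup_eq ⟨⟨T, hT, hTdisj⟩, ?_⟩⟩
  rintro m ⟨f, hf, hdisj⟩
  simpa using card_le_half_of_pairwise_disjoint f hf hdisj
end
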